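/- Let t > 0, let m ≥ 0 be an integer, and let 0 < ε < A < π. Let G(z) = e^{−z²/(4t)} and let L̃^m G denote the m-fold application of the operator (L̃g)(z) = −(1/(2π))·g′(z)/sin z to G (a holomorphic function on ℂ ∖ πℤ). Then there exists a constant C > 0 such that for all z in the region S_{ε,A} = { z ∈ ℂ : Re z > 0, |Im z| < A, and |z − kπ| > ε for every positive integer k }, one has |(L̃^m G)(z)| ≤ C·(1 + |z|)^m · e^{−Re(z²)/(4t)}. -/

import Mathlib

/-!
`L̃` maps even functions to even functions, and for even `F` the quotient `F'(z) / sin z` has a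
removable singularity at `0`. Hence every iterate `L̃^m G` extends holomorphically to
`ℂ ∖ π(ℤ ∖ {0})`, and the bound is proved for these extensions by induction on `m`, on the
regions `{z | |z - kπ| > e for all k ≠ 0}` with `e` halved at each step. For `|z| ≥ e/2`,
Cauchy's estimate on a disc of radius `e / (2 (1 + |z|))` costs exactly one factor `1 + |z|`,
the Gaussian weight changes only by a bounded factor on that disc, and
`|sin z| ≥ (2/π) dist(z, πℤ)`. For `|z| < e/2` continuity of the extension suffices.
-/

open Complex

/-- The operator `L̃` acting on functions of a complex variable:
`(L̃ g)(z) = -(1/(2π)) g'(z)/sin z`. -/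
noncomputable def LsphC (g : ℂ → ℂ) : ℂ → ℂ :=
  fun z => -(1 / (2 * (Real.pi : ℂ))) * deriv g z / Complex.sin z

open Metric Set Filter Topology
open scoped Real

lemma Function.Even.deriv_odd {f : ℂ → ℂ} (hf : f.Even) : (deriv f).Odd := by
  intro z
  have h := deriv_comp_neg f z
  rw [show (fun x => f (-x)) = f from funext hf] at h
  rw [h, neg_neg]

lemma Function.Even.deriv_zero {f : ℂ → ℂ} (hf : f.Even) : deriv f 0 = 0 :=
  self_eq_neg.mp (by simpa using hf.deriv_odd 0)

lemma norm_sin_sq (z : ℂ) : ‖sin z‖ ^ 2 = Real.sin z.re ^ 2 + Real.sinh z.im ^ 2 := by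
  rw [sin_eq, ← ofReal_sin, ← ofReal_cosh, ← ofReal_cos, ← ofReal_sinh, ← ofReal_mul,
    ← ofReal_mul, Complex.sq_norm, normSq_add_mul_I]
  nlinarith [Real.sin_sq_add_cos_sq z.re, Real.cosh_sq z.im]

lemma two_div_pi_mul_norm_le_norm_sin {w : ℂ} (hw : |w.re| ≤ π / 2) :
    2 / π * ‖w‖ ≤ ‖sin w‖ := by
  have hπ := Real.pi_gt_three
  have hre : 2 / π * |w.re| ≤ |Real.sin w.re| := by
    rcases le_total 0 w.re with h | h
    · rw [abs_of_nonneg h]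
      exact (Real.mul_le_sin h (by rwa [abs_of_nonneg h] at hw)).trans (le_abs_self _)
    · rw [abs_of_nonpos h]
      have := Real.mul_le_sin (neg_nonneg.2 h) (by rwa [abs_of_nonpos h] at hw)
      rw [Real.sin_neg] at this
      exact this.trans (neg_le_abs _)
  have him : |w.im| ≤ |Real.sinh w.im| := by
    rw [Real.abs_sinh]
    exact Real.self_le_sinh_iff.2 (abs_nonneg _)
  have hsq : (2 / π * ‖w‖) ^ 2 ≤ ‖sin w‖ ^ 2 := by
    have hc : (2 / π) ^ 2 ≤ 1 :=
      pow_le_one₀ (by positivity) (by rw [div_le_one (by positivity)]; linarith)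
    have h1 := pow_le_pow_left₀ (by positivity) hre 2
    have h2 := pow_le_pow_left₀ (abs_nonneg _) him 2
    simp only [mul_pow, sq_abs] at h1 h2
    rw [norm_sin_sq, mul_pow, Complex.sq_norm, normSq_apply]
    nlinarith [mul_le_of_le_one_left (sq_nonneg w.im) hc]
  exact (pow_le_pow_iff_left₀ (by positivity) (norm_nonneg _) two_ne_zero).1 hsq

lemma two_div_pi_mul_le_norm_sin {z : ℂ} {δ : ℝ} (h : ∀ k : ℤ, δ ≤ ‖z - k * π‖) :
    2 / π * δ ≤ ‖sin z‖ := by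
  have hπ := Real.pi_pos
  set k := round (z.re / π)
  have hre : |(z - k * π).re| ≤ π / 2 := by
    have hk : (z - k * π).re = (z.re / π - k) * π := by
      simp only [sub_re, mul_re, intCast_re, ofReal_re, intCast_im, ofReal_im]
      field_simp
      ring
    rw [hk, abs_mul, abs_of_pos hπ]
    nlinarith [abs_sub_round (z.re / π)]
  calc 2 / π * δ ≤ 2 / π * ‖z - k * π‖ := by gcongr; exact h k
    _ ≤ ‖sin (z - k * π)‖ := two_div_pi_mul_norm_le_norm_sin hre
    _ = ‖sin z‖ := by simp [sin_antiperiodic.sub_int_mul_eq]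

def nonzeroSinZeros : Set ℂ := {z | z ≠ 0 ∧ sin z = 0}

lemma dslope_sin_eq_zero_iff {z : ℂ} : dslope sin 0 z = 0 ↔ z ∈ nonzeroSinZeros := by
  rcases eq_or_ne z 0 with rfl | hz
  · simp [nonzeroSinZeros, dslope_same]
  · rw [dslope_of_ne _ hz, slope_def_field]
    simp [nonzeroSinZeros, hz]

lemma isClosed_nonzeroSinZeros : IsClosed nonzeroSinZeros := by
  have h : nonzeroSinZeros = {z | dslope sin 0 z = 0} := by
    ext z
    exact dslope_sin_eq_zero_iff.symm
  rw [h]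
  exact isClosed_eq (differentiableOn_univ.1 ((differentiableOn_dslope univ_mem).2
    differentiable_sin.differentiableOn)).continuous continuous_const

/-- For even `F` this is the holomorphic extension of `LsphC F` across `0`. -/
noncomputable def LsphCReg (F : ℂ → ℂ) : ℂ → ℂ :=
  fun z => -(1 / (2 * (π : ℂ))) * dslope (deriv F) 0 z / dslope sin 0 z

lemma lsphCReg_eq_lsphC {F : ℂ → ℂ} (hF : F.Even) {z : ℂ} (hz : z ≠ 0) :
    LsphCReg F z = LsphC F z := by
  simp only [LsphCReg, LsphC, dslope_of_ne _ hz, slope_def_field, hF.deriv_zero, sin_zero,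
    sub_zero, mul_div_assoc, div_div_div_cancel_right₀ hz]

lemma Function.Even.lsphCReg {F : ℂ → ℂ} (hF : F.Even) : (LsphCReg F).Even := by
  intro z
  rcases eq_or_ne z 0 with rfl | hz
  · rw [neg_zero]
  rw [lsphCReg_eq_lsphC hF hz, lsphCReg_eq_lsphC hF (neg_ne_zero.2 hz)]
  simp only [LsphC, hF.deriv_odd z, sin_neg, mul_neg, neg_div_neg_eq]

lemma DifferentiableOn.lsphCReg {F : ℂ → ℂ} (hF : DifferentiableOn ℂ F nonzeroSinZerosᶜ) :
    DifferentiableOn ℂ (LsphCReg F) nonzeroSinZerosᶜ := by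
  have hU : IsOpen nonzeroSinZerosᶜ := isClosed_nonzeroSinZeros.isOpen_compl
  have h0 : nonzeroSinZerosᶜ ∈ 𝓝 (0 : ℂ) := hU.mem_nhds (by simp [nonzeroSinZeros])
  have hnum := (differentiableOn_dslope h0).2 (hF.analyticOnNhd hU).deriv.differentiableOn
  have hden := (differentiableOn_dslope h0).2 differentiable_sin.differentiableOn
  exact (hnum.const_mul _).div hden fun z hz => dslope_sin_eq_zero_iff.not.2 hz

section Iterates

variable {G : ℂ → ℂ}

lemma Function.Even.iterate_lsphCReg (hG : G.Even) (m : ℕ) : (LsphCReg^[m] G).Even := by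
  induction m with
  | zero => exact hG
  | succ m ih => rw [Function.iterate_succ_apply']; exact ih.lsphCReg

lemma Differentiable.differentiableOn_iterate_lsphCReg (hG : Differentiable ℂ G) (m : ℕ) :
    DifferentiableOn ℂ (LsphCReg^[m] G) nonzeroSinZerosᶜ := by
  induction m with
  | zero => exact hG.differentiableOn
  | succ m ih => rw [Function.iterate_succ_apply']; exact ih.lsphCReg

lemma iterate_lsphCReg_eq_iterate_lsphC (hG : G.Even) (m : ℕ) {z : ℂ} (hz : sin z ≠ 0) :
    (LsphCReg^[m] G) z = (LsphC^[m] G) z := by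
  induction m generalizing z with
  | zero => rfl
  | succ m ih =>
    have hz0 : z ≠ 0 := by rintro rfl; exact hz sin_zero
    have hev : LsphCReg^[m] G =ᶠ[𝓝 z] LsphC^[m] G :=
      Filter.eventually_of_mem ((isOpen_ne_fun continuous_sin continuous_const).mem_nhds hz)
        fun w hw => ih hw
    rw [Function.iterate_succ_apply', Function.iterate_succ_apply',
      lsphCReg_eq_lsphC (hG.iterate_lsphCReg m) hz0, LsphC, LsphC, hev.deriv_eq]

end Iterates

def farFromPoles (e : ℝ) : Set ℂ := {z | ∀ k : ℤ, k ≠ 0 → e < ‖z - k * π‖}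

lemma farFromPoles_subset_compl {e : ℝ} (he : 0 ≤ e) : farFromPoles e ⊆ nonzeroSinZerosᶜ := by
  rintro z hz ⟨hz0, hsin⟩
  obtain ⟨k, rfl⟩ := sin_eq_zero_iff.1 hsin
  have hk : k ≠ 0 := by rintro rfl; simp at hz0
  simpa using he.trans_lt (hz k hk)

lemma mem_farFromPoles_of_dist_le {e η : ℝ} {z w : ℂ} (hz : z ∈ farFromPoles e)
    (hw : dist w z ≤ η) : w ∈ farFromPoles (e - η) := by
  intro k hk
  have hzw : ‖z - w‖ ≤ η := by rwa [← dist_eq_norm, dist_comm]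
  linarith [hz k hk, norm_sub_le_norm_sub_add_norm_sub z w (k * π)]

lemma closedBall_subset_compl_nonzeroSinZeros {r : ℝ} (hr : r < π) :
    closedBall 0 r ⊆ nonzeroSinZerosᶜ := by
  rintro z hz ⟨hz0, hsin⟩
  obtain ⟨k, rfl⟩ := sin_eq_zero_iff.1 hsin
  have hk : k ≠ 0 := by rintro rfl; simp at hz0
  have hk1 : (1 : ℝ) ≤ |(k : ℝ)| := by exact_mod_cast Int.one_le_abs hk
  rw [mem_closedBall_zero_iff, norm_mul, norm_intCast, norm_real,
    Real.norm_of_nonneg Real.pi_pos.le] at hz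
  nlinarith [Real.pi_pos]

lemma mem_farFromPoles_of_re_pos {e : ℝ} {z : ℂ} (hre : 0 < z.re)
    (hpoles : ∀ k : ℕ, 0 < k → e < ‖z - k * π‖) (he : e ≤ π) : z ∈ farFromPoles e := by
  intro k hk
  rcases hk.lt_or_gt with hneg | hpos
  · have hre_le : z.re - k * π ≤ ‖z - k * π‖ := by simpa using re_le_norm (z - k * π)
    have hk1 : (k : ℝ) ≤ -1 := by exact_mod_cast (by omega : k ≤ -1)
    nlinarith [Real.pi_pos]
  · have hcast : ((k.toNat : ℕ) : ℂ) = k := by exact_mod_cast Int.toNat_of_nonneg hpos.le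
    simpa only [hcast] using hpoles k.toNat (by omega)

lemma norm_cexp_neg_sq_div (t : ℝ) (z : ℂ) :
    ‖exp (-(z ^ 2) / (4 * (t : ℂ)))‖ = Real.exp (-(z ^ 2).re / (4 * t)) := by
  rw [norm_exp, show (4 * (t : ℂ)) = ((4 * t : ℝ) : ℂ) by push_cast; ring, div_ofReal_re, neg_re]

section ShiftedGaussian

variable {η : ℝ} {z w : ℂ}

lemma one_add_norm_le_of_dist_le (hη : 0 ≤ η) (hw : dist w z ≤ η / (1 + ‖z‖)) :
    1 + ‖w‖ ≤ (1 + η) * (1 + ‖z‖) := by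
  have hr : η / (1 + ‖z‖) ≤ η := div_le_self hη (by linarith [norm_nonneg z])
  have := norm_le_norm_add_norm_sub' w z
  rw [← dist_eq_norm] at this
  nlinarith [norm_nonneg z]

lemma re_sq_sub_le_of_dist_le (hη : 0 ≤ η) (hw : dist w z ≤ η / (1 + ‖z‖)) :
    (z ^ 2).re - η * (2 + η) ≤ (w ^ 2).re := by
  set r := η / (1 + ‖z‖)
  have hz := norm_nonneg z
  have hr0 : 0 ≤ r := by positivity
  have hrz : r * (1 + ‖z‖) = η := div_mul_cancel₀ η (by positivity)
  have hrη : r ≤ η := div_le_self hη (by linarith)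
  have hd : ‖w - z‖ ≤ r := by rwa [← dist_eq_norm]
  have hsum : ‖w + z‖ ≤ r + 2 * ‖z‖ := by
    calc ‖w + z‖ = ‖(w - z) + 2 * z‖ := by ring_nf
      _ ≤ ‖w - z‖ + ‖2 * z‖ := norm_add_le _ _
      _ ≤ r + 2 * ‖z‖ := by rw [norm_mul, Complex.norm_two]; linarith
  have hdiff : ‖w ^ 2 - z ^ 2‖ ≤ η * (2 + η) := by
    rw [show w ^ 2 - z ^ 2 = (w - z) * (w + z) by ring, norm_mul]
    calc ‖w - z‖ * ‖w + z‖ ≤ r * (r + 2 * ‖z‖) := mul_le_mul hd hsum (norm_nonneg _) hr0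
      _ ≤ η * (2 + η) := by nlinarith
  have := (abs_le.1 ((abs_re_le_norm _).trans hdiff)).1
  rw [sub_re] at this
  linarith

lemma exp_neg_re_sq_le_of_dist_le {t : ℝ} (ht : 0 < t) (hη : 0 ≤ η)
    (hw : dist w z ≤ η / (1 + ‖z‖)) :
    Real.exp (-(w ^ 2).re / (4 * t)) ≤
      Real.exp (η * (2 + η) / (4 * t)) * Real.exp (-(z ^ 2).re / (4 * t)) := by
  rw [← Real.exp_add, ← add_div]
  gcongr
  linarith [re_sq_sub_le_of_dist_le hη hw]

end ShiftedGaussian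

lemma norm_deriv_le_of_gaussian_bound {F : ℂ → ℂ} {t C η : ℝ} {m : ℕ} {z : ℂ} (ht : 0 < t)
    (hC : 0 ≤ C) (hη : 0 < η) (hF : DifferentiableOn ℂ F (closedBall z (η / (1 + ‖z‖))))
    (hbd : ∀ w ∈ closedBall z (η / (1 + ‖z‖)),
      ‖F w‖ ≤ C * (1 + ‖w‖) ^ m * Real.exp (-(w ^ 2).re / (4 * t))) :
    ‖deriv F z‖ ≤ C * (1 + η) ^ m * Real.exp (η * (2 + η) / (4 * t)) / η *
      (1 + ‖z‖) ^ (m + 1) * Real.exp (-(z ^ 2).re / (4 * t)) := by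
  set r := η / (1 + ‖z‖)
  have hr : 0 < r := by positivity
  have hsphere : ∀ w ∈ sphere z r, ‖F w‖ ≤ C * ((1 + η) * (1 + ‖z‖)) ^ m *
      (Real.exp (η * (2 + η) / (4 * t)) * Real.exp (-(z ^ 2).re / (4 * t))) := by
    intro w hw
    have hw' := sphere_subset_closedBall hw
    have hwz : dist w z ≤ r := mem_closedBall.1 hw'
    calc ‖F w‖ ≤ C * (1 + ‖w‖) ^ m * Real.exp (-(w ^ 2).re / (4 * t)) := hbd w hw'
      _ ≤ _ := by
        gcongr
        · exact one_add_norm_le_of_dist_le hη.le hwz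
        · exact exp_neg_re_sq_le_of_dist_le ht hη.le hwz
  have hcl : DiffContOnCl ℂ F (ball z r) :=
    DifferentiableOn.diffContOnCl (by rwa [closure_ball z hr.ne'])
  calc ‖deriv F z‖ ≤ _ / r := norm_deriv_le_of_forall_mem_sphere_norm_le hr hcl hsphere
    _ = _ := by
      simp only [r]
      rw [mul_pow]
      field_simp
      ring

lemma exists_gaussian_bound_of_bound_off_closedBall {f : ℂ → ℂ} {S : Set ℂ} {t R C : ℝ}
    {m : ℕ} (ht : 0 < t) (hf : ContinuousOn f (closedBall 0 R))
    (hbd : ∀ z ∈ S, R ≤ ‖z‖ → ‖f z‖ ≤ C * (1 + ‖z‖) ^ m * Real.exp (-(z ^ 2).re / (4 * t))) :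
    ∃ C' > 0, ∀ z ∈ S,
      ‖f z‖ ≤ C' * (1 + ‖z‖) ^ m * Real.exp (-(z ^ 2).re / (4 * t)) := by
  obtain ⟨M, hM⟩ := (isCompact_closedBall (0 : ℂ) R).exists_bound_of_continuousOn hf
  refine ⟨max C 0 + max M 0 * Real.exp (R ^ 2 / (4 * t)) + 1, by positivity, fun z hz => ?_⟩
  have hW : 0 ≤ (1 + ‖z‖) ^ m * Real.exp (-(z ^ 2).re / (4 * t)) := by positivity
  rcases le_or_gt R ‖z‖ with hz_big | hz_small
  · calc ‖f z‖ ≤ C * (1 + ‖z‖) ^ m * Real.exp (-(z ^ 2).re / (4 * t)) := hbd z hz hz_big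
      _ ≤ _ := by nlinarith [mul_nonneg (le_max_right M 0) (Real.exp_pos (R ^ 2 / (4 * t))).le,
          le_max_left C 0]
  · have hexp : 1 ≤ Real.exp (R ^ 2 / (4 * t)) * Real.exp (-(z ^ 2).re / (4 * t)) := by
      rw [← Real.exp_add, ← add_div, Real.one_le_exp_iff]
      have := (re_le_norm (z ^ 2)).trans_eq (norm_pow z 2)
      have : ‖z‖ ^ 2 ≤ R ^ 2 := pow_le_pow_left₀ (norm_nonneg z) hz_small.le 2
      exact div_nonneg (by linarith) (by positivity)
    have hpow : 1 ≤ (1 + ‖z‖) ^ m := one_le_pow₀ (by linarith [norm_nonneg z])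
    calc ‖f z‖ ≤ max M 0 := (hM z (mem_closedBall_zero_iff.2 hz_small.le)).trans (le_max_left _ _)
      _ ≤ max M 0 * (Real.exp (R ^ 2 / (4 * t)) * Real.exp (-(z ^ 2).re / (4 * t))) *
          (1 + ‖z‖) ^ m :=
        (le_mul_of_one_le_right (le_max_right _ _) hexp).trans
          (le_mul_of_one_le_right (by positivity) hpow)
      _ ≤ _ := by nlinarith [mul_nonneg (add_nonneg (le_max_right C 0) zero_le_one) hW]

lemma norm_lsphC_le {F : ℂ → ℂ} {z : ℂ} {δ D : ℝ} (hδ : 0 < δ)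
    (hz : ∀ k : ℤ, δ ≤ ‖z - k * π‖) (hD : ‖deriv F z‖ ≤ D) : ‖LsphC F z‖ ≤ D / (4 * δ) := by
  have hπ := Real.pi_pos
  have hsin : 2 * δ ≤ π * ‖sin z‖ := by
    have := two_div_pi_mul_le_norm_sin hz
    rw [div_mul_eq_mul_div, div_le_iff₀ hπ] at this
    linarith
  have hs : 0 < ‖sin z‖ := pos_of_mul_pos_right (by linarith) hπ.le
  have hnorm : ‖LsphC F z‖ = ‖deriv F z‖ / (2 * π * ‖sin z‖) := by
    simp only [LsphC, one_div, mul_inv_rev, neg_mul, norm_div, norm_neg, norm_mul, norm_inv,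
      norm_real, Real.norm_eq_abs, abs_of_pos hπ, norm_ofNat]
    field_simp
  rw [hnorm, div_le_div_iff₀ (by positivity) (by positivity)]
  nlinarith [norm_nonneg (deriv F z)]

lemma even_cexp_neg_sq_div (c : ℂ) : Function.Even fun w : ℂ => exp (-(w ^ 2) / c) :=
  fun w => by simp only [neg_sq]

theorem exists_gaussian_bound_iterate_lsphCReg {t : ℝ} (ht : 0 < t) (m : ℕ) {e : ℝ}
    (he : 0 < e) (he1 : e ≤ 1) :
    ∃ C > 0, ∀ z ∈ farFromPoles e,
      ‖(LsphCReg^[m] fun w => exp (-(w ^ 2) / (4 * (t : ℂ)))) z‖ ≤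
        C * (1 + ‖z‖) ^ m * Real.exp (-(z ^ 2).re / (4 * t)) := by
  induction m generalizing e with
  | zero => exact ⟨1, one_pos, fun z _ => by simp [norm_cexp_neg_sq_div]⟩
  | succ m ih =>
    obtain ⟨C, hC, hbd⟩ := ih (half_pos he) (by linarith)
    set F := LsphCReg^[m] fun w => exp (-(w ^ 2) / (4 * (t : ℂ)))
    have hFeven : F.Even := (even_cexp_neg_sq_div _).iterate_lsphCReg m
    have hFdiff : DifferentiableOn ℂ F nonzeroSinZerosᶜ :=
      (by fun_prop : Differentiable ℂ _).differentiableOn_iterate_lsphCReg m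
    simp only [Function.iterate_succ_apply']
    refine exists_gaussian_bound_of_bound_off_closedBall (R := e / 2)
      (C := C * (1 + e / 2) ^ m * Real.exp (e / 2 * (2 + e / 2) / (4 * t)) / (e / 2) /
        (4 * (e / 2))) ht
      (hFdiff.lsphCReg.continuousOn.mono
        (closedBall_subset_compl_nonzeroSinZeros (by linarith [Real.pi_gt_three])))
      fun z hz hze => ?_
    have hz0 : z ≠ 0 := by rintro rfl; rw [norm_zero] at hze; linarith
    have hball : closedBall z (e / 2 / (1 + ‖z‖)) ⊆ farFromPoles (e / 2) := fun w hw => by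
      have := mem_farFromPoles_of_dist_le hz ((mem_closedBall.1 hw).trans
        (div_le_self (by positivity) (by linarith [norm_nonneg z])))
      rwa [sub_half] at this
    have hderiv := norm_deriv_le_of_gaussian_bound ht hC.le (half_pos he)
      (hFdiff.mono (hball.trans (farFromPoles_subset_compl (by positivity))))
      fun w hw => hbd w (hball hw)
    rw [lsphCReg_eq_lsphC hFeven hz0]
    refine (norm_lsphC_le (half_pos he) (fun k => ?_) hderiv).trans_eq (by ring)
    rcases eq_or_ne k 0 with rfl | hk
    · simpa using hze
    · exact (hz k hk).le.trans' (by linarith)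

theorem stmt_6_general (t : ℝ) (ht : 0 < t) (m : ℕ) (ε A : ℝ)
    (hε : 0 < ε) :
    ∃ C : ℝ, 0 < C ∧ ∀ z : ℂ, 0 < z.re → |z.im| < A →
      (∀ k : ℕ, 0 < k → ‖z - (k : ℂ) * (Real.pi : ℂ)‖ > ε) →
      ‖LsphC^[m] (fun w => Complex.exp (-(w ^ 2) / (4 * (t : ℂ)))) z‖
        ≤ C * (1 + ‖z‖) ^ m * Real.exp (-((z ^ 2).re) / (4 * t)) := by
  obtain ⟨C, hC, hbd⟩ :=
    exists_gaussian_bound_iterate_lsphCReg ht m (lt_min hε one_pos) (min_le_right ε 1)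
  refine ⟨C, hC, fun z hre _ hpoles => ?_⟩
  have hz : z ∈ farFromPoles (min ε 1) :=
    mem_farFromPoles_of_re_pos hre (fun k hk => (min_le_left ε 1).trans_lt (hpoles k hk))
      ((min_le_right ε 1).trans (by linarith [Real.pi_gt_three]))
  have hsin : sin z ≠ 0 := fun h =>
    farFromPoles_subset_compl (by positivity) hz ⟨by rintro rfl; simp at hre, h⟩
  rw [← iterate_lsphCReg_eq_iterate_lsphC (even_cexp_neg_sq_div _) m hsin]
  exact hbd z hz

/-- Gaussian bound for `L̃^m` applied to `G(z) = e^{-z²/(4t)}` on the region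
`S_{ε,A}`. -/
theorem stmt_6 (t : ℝ) (ht : 0 < t) (m : ℕ) (ε A : ℝ)
    (hε : 0 < ε) (hεA : ε < A) (hA : A < Real.pi) :
    ∃ C : ℝ, 0 < C ∧ ∀ z : ℂ, 0 < z.re → |z.im| < A →
      (∀ k : ℕ, 0 < k → ‖z - (k : ℂ) * (Real.pi : ℂ)‖ > ε) →
      ‖LsphC^[m] (fun w => Complex.exp (-(w ^ 2) / (4 * (t : ℂ)))) z‖
        ≤ C * (1 + ‖z‖) ^ m * Real.exp (-((z ^ 2).re) / (4 * t)) :=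
  stmt_6_general t ht m ε A hε
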